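/- The map sending a permutation of [n] (with distinct entries) to its Cartesian tree induces a bijection between the set of possible answer functions of range-minimum queries on arrays of length n and binary trees with n nodes; in particular, for any array A of n distinct numbers, rmq_A(i,j) equals the inorder rank of the lowest common ancestor in the Cartesian tree of A of the nodes with inorder ranks i and j. -/

import Mathlib

open Filter Real

/-- Binary trees: empty (`leaf`) or a node with left and right subtrees. -/
inductive BinTree where
  | leaf : BinTree
  | node : BinTree → BinTree → BinTree
deriving DecidableEq, Repr

namespace BinTree

/-- Number of nodes. -/
def size : BinTree → ℕ
  | leaf => 0
  | node l r => l.size + r.size + 1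

/-- Product of subtree sizes over all nodes: `∏_{v∈t} st(v)`. -/
def stProd : BinTree → ℕ
  | leaf => 1
  | node l r => (node l r).size * l.stProd * r.stProd

/-- Subtree-size entropy: `H_st(t) = ∑_{v∈t} lg st(v)`. -/
noncomputable def stEntropy : BinTree → ℝ
  | leaf => 0
  | node l r => Real.logb 2 ((node l r).size : ℝ) + l.stEntropy + r.stEntropy

/-- Size of the left subtree of the root. -/
def leftSize : BinTree → ℕ
  | leaf => 0
  | node l _ => l.size

/-- Every node has at most one (nonempty) child. -/
def isPath : BinTree → Prop
  | leaf => True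
  | node l r => (l = leaf ∨ r = leaf) ∧ l.isPath ∧ r.isPath

/-- At every node the sizes of the two subtrees differ by at most 1. -/
def isBalanced : BinTree → Prop
  | leaf => True
  | node l r => ((l.size : ℤ) - (r.size : ℤ)).natAbs ≤ 1 ∧ l.isBalanced ∧ r.isBalanced

/-- Number of leaves (nodes with no children). -/
def leafCount : BinTree → ℕ
  | leaf => 0
  | node l r => (if l = leaf ∧ r = leaf then 1 else 0) + l.leafCount + r.leafCount

/-- Number of binary nodes (both children present). -/
def binCount : BinTree → ℕ
  | leaf => 0
  | node l r => (if l ≠ leaf ∧ r ≠ leaf then 1 else 0) + l.binCount + r.binCount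

/-- Number of nodes with only a left child. -/
def leftOnlyCount : BinTree → ℕ
  | leaf => 0
  | node l r => (if l ≠ leaf ∧ r = leaf then 1 else 0) + l.leftOnlyCount + r.leftOnlyCount

/-- Number of nodes with only a right child. -/
def rightOnlyCount : BinTree → ℕ
  | leaf => 0
  | node l r => (if l = leaf ∧ r ≠ leaf then 1 else 0) + l.rightOnlyCount + r.rightOnlyCount

end BinTree

/-- Cartesian tree construction with explicit fuel (fuel ≥ length suffices). -/
def cartesianAux : ℕ → List ℕ → BinTree
  | 0, _ => .leaf
  | _ + 1, [] => .leaf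
  | fuel + 1, x :: xs =>
      let m := List.foldl min x xs
      let i := (x :: xs).idxOf m
      .node (cartesianAux fuel ((x :: xs).take i)) (cartesianAux fuel ((x :: xs).drop (i + 1)))

/-- The Cartesian tree of a list: root at the (first) minimum, left/right
subtrees built recursively from the prefix/suffix. -/
def cartesian (l : List ℕ) : BinTree := cartesianAux l.length l

/-- The array `A[1..n]` (as a list) associated with a permutation of `Fin n`. -/
def permList {n : ℕ} (p : Equiv.Perm (Fin n)) : List ℕ := List.ofFn fun k => (p k : ℕ)

/-- All binary trees with exactly `n` nodes. -/
def treesOfSize : ℕ → Finset BinTree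
  | 0 => {BinTree.leaf}
  | n + 1 =>
    (Finset.range (n + 1)).attach.biUnion fun i =>
      ((treesOfSize i.1) ×ˢ (treesOfSize (n - i.1))).image fun p => BinTree.node p.1 p.2
termination_by n => n
decreasing_by
  · exact Nat.lt_succ_of_le (Nat.le_of_lt_succ (Finset.mem_range.mp i.2))
  · exact Nat.lt_succ_of_le (Nat.sub_le n i.1)

/-- Shannon entropy (base 2) of the random-BST shape distribution on `n` nodes,
which assigns probability `1/stProd t` to each tree `t` on `n` nodes. -/
noncomputable def shapeEntropy (n : ℕ) : ℝ :=
  - ∑ t ∈ treesOfSize n, (1 / (t.stProd : ℝ)) * Real.logb 2 (1 / (t.stProd : ℝ))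

/-- Expectation of `f` under the random-BST shape distribution on `n` nodes. -/
noncomputable def expCount (f : BinTree → ℕ) (n : ℕ) : ℝ :=
  ∑ t ∈ treesOfSize n, (1 / (t.stProd : ℝ)) * (f t : ℝ)

/-- The entropy recurrence: `H 0 = H 1 = 0`, `H n = lg n + (2/n) ∑_{i<n} H i`. -/
noncomputable def Hrec : ℕ → ℝ
  | 0 => 0
  | 1 => 0
  | n + 2 =>
      Real.logb 2 ((n + 2 : ℕ) : ℝ) +
        (2 / ((n + 2 : ℕ) : ℝ)) * ∑ i ∈ (Finset.range (n + 2)).attach, Hrec i.1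
termination_by n => n
decreasing_by exact Finset.mem_range.mp i.2

/-- `rmq_A(i,j)` (1-based): the position of the (first) minimum of `A[i..j]`. -/
def rmqFun (A : List ℕ) (i j : ℕ) : ℕ :=
  let s := (A.drop (i - 1)).take (j - i + 1)
  i + s.idxOf (List.foldl min (s.headD 0) s)

/-- The inorder rank of the LCA of the nodes with inorder ranks `i` and `j`. -/
def lcaInorder : BinTree → ℕ → ℕ → ℕ
  | .leaf, _, _ => 0
  | .node l r, i, j =>
      let m := l.size + 1
      if i < m ∧ j < m then lcaInorder l i j
      else if m < i ∧ m < j then m + lcaInorder r (i - m) (j - m)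
      else m

/-- The subtree rooted at the node reached from the root by the given
left(`false`)/right(`true`) directions, if it exists. -/
def subAt : BinTree → List Bool → Option BinTree
  | t, [] => some t
  | .leaf, _ :: _ => none
  | .node l _, false :: p => subAt l p
  | .node _ r, true :: p => subAt r p

/-- Subtree size of the node at a position (0 if there is no node there). -/
def stAt (t : BinTree) (pos : List Bool) : ℕ := ((subAt t pos).getD .leaf).size

/-- Left-subtree size of the node at a position. -/
def lsAt (t : BinTree) (pos : List Bool) : ℕ := ((subAt t pos).getD .leaf).leftSize

/-- `Pruned μ s`: `μ` is obtained from `s` by replacing some subtrees by `leaf`. -/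
inductive Pruned : BinTree → BinTree → Prop
  | leaf (t) : Pruned .leaf t
  | node {l' r' l r} : Pruned l' l → Pruned r' r → Pruned (.node l' r') (.node l r)

/-- `PrunedN k μ s`: `μ` is obtained from `s` by pruning exactly `k` (nonempty) subtrees. -/
inductive PrunedN : ℕ → BinTree → BinTree → Prop
  | refl (t) : PrunedN 0 t t
  | prune (l r) : PrunedN 1 .leaf (.node l r)
  | node {a b l' r' l r} : PrunedN a l' l → PrunedN b r' r → PrunedN (a + b) (.node l' r') (.node l r)

/-- `IsSubtree s t`: `s` is the subtree of `t` rooted at some node (or `t` itself). -/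
inductive IsSubtree : BinTree → BinTree → Prop
  | refl (t) : IsSubtree t t
  | left {s l r} : IsSubtree s l → IsSubtree s (.node l r)
  | right {s l r} : IsSubtree s r → IsSubtree s (.node l r)

/-- `∑_{v∈μ} lg st_s(v)`: sum over the nodes of `μ` of the log-subtree-sizes
taken in the host tree `s` (for `μ` pruned from `s`). -/
noncomputable def mixedEntropy : BinTree → BinTree → ℝ
  | .leaf, _ => 0
  | .node _ _, .leaf => 0
  | .node l' r', .node l r =>
      Real.logb 2 ((BinTree.node l r).size : ℝ) + mixedEntropy l' l + mixedEntropy r' r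

/-- 1-based preorder index of the node at a position (0 if no node there). -/
def preorderIdx : BinTree → List Bool → ℕ
  | _, [] => 1
  | .leaf, _ :: _ => 0
  | .node l _, false :: p => 1 + preorderIdx l p
  | .node l r, true :: p => 1 + l.size + preorderIdx r p

/-- 1-based inorder index of the node at a position. -/
def inorderIdx : BinTree → List Bool → ℕ
  | t, [] => t.leftSize + 1
  | .leaf, _ :: _ => 0
  | .node l _, false :: p => inorderIdx l p
  | .node l r, true :: p => l.size + 1 + inorderIdx r p

/-- Binary entropy function (base 2). -/
noncomputable def binH (x : ℝ) : ℝ := -x * Real.logb 2 x - (1 - x) * Real.logb 2 (1 - x)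

/-!
Both `rmqFun A` and `cartesian A` are governed by the position `k` of the minimum of `A`: a
query window containing `k` is answered by `k` itself, the root, which is then also the LCA; a
window on one side of `k` is answered inside the prefix or the suffix, whose Cartesian trees are
the two subtrees of the root. So the answer function of `A` is the LCA function of its Cartesian
tree. A tree is determined by its LCA function, since its root is `lca(1, n)`, and every tree `t`
is the Cartesian tree of the array listing the preorder ranks of its nodes in inorder, because a
node's preorder rank is smaller than those of all its descendants.
-/

def argminIdx (l : List ℕ) : ℕ := l.idxOf (l.foldl min (l.headD 0))

lemma foldl_min_headD_eq_iff {l : List ℕ} (hl : l ≠ []) {a : ℕ} :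
    l.foldl min (l.headD 0) = a ↔ a ∈ l ∧ ∀ b ∈ l, a ≤ b := by
  obtain ⟨x, xs, rfl⟩ := List.exists_cons_of_ne_nil hl
  rw [← List.min?_eq_some_iff, List.min?_cons', List.headD_cons, List.foldl_cons, min_self,
    Option.some_inj]

lemma argminIdx_lt_length {l : List ℕ} (hl : l ≠ []) : argminIdx l < l.length :=
  List.idxOf_lt_length_iff.mpr ((foldl_min_headD_eq_iff hl).mp rfl).1

lemma getElem_argminIdx_le {l : List ℕ} (hl : l ≠ []) :
    ∀ b ∈ l, l[argminIdx l]'(argminIdx_lt_length hl) ≤ b := by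
  simp only [argminIdx, List.getElem_idxOf]
  exact ((foldl_min_headD_eq_iff hl).mp rfl).2

lemma argminIdx_eq_of_nodup {l : List ℕ} (hnd : l.Nodup) {k : ℕ} (hk : k < l.length)
    (hmin : ∀ b ∈ l, l[k] ≤ b) : argminIdx l = k := by
  have hl : l ≠ [] := List.ne_nil_of_length_pos (by omega)
  rw [argminIdx, (foldl_min_headD_eq_iff hl).mpr ⟨List.getElem_mem hk, hmin⟩,
    hnd.idxOf_getElem]

lemma argminIdx_cons (x : ℕ) (xs : List ℕ) :
    argminIdx (x :: xs) = (x :: xs).idxOf (xs.foldl min x) := by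
  simp [argminIdx]

lemma length_take_argminIdx_lt {l : List ℕ} (hl : l ≠ []) :
    (l.take (argminIdx l)).length < l.length := by
  simpa using argminIdx_lt_length hl

lemma length_drop_argminIdx_lt {l : List ℕ} (hl : l ≠ []) :
    (l.drop (argminIdx l + 1)).length < l.length := by
  simpa using List.length_pos_of_ne_nil hl

lemma cartesianAux_congr {f g : ℕ} {l : List ℕ} (hf : l.length ≤ f) (hg : l.length ≤ g) :
    cartesianAux f l = cartesianAux g l := by
  induction f generalizing l g with
  | zero => rw [List.eq_nil_of_length_eq_zero (Nat.le_zero.mp hf)]; cases g <;> rfl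
  | succ f ih =>
    obtain _ | ⟨x, xs⟩ := l
    · cases g <;> rfl
    obtain ⟨g, rfl⟩ : ∃ g', g = g' + 1 := ⟨g - 1, by simp only [List.length_cons] at hg; omega⟩
    have hne := List.cons_ne_nil x xs
    have := length_take_argminIdx_lt hne
    have := length_drop_argminIdx_lt hne
    simp only [List.length_cons] at *
    simp only [cartesianAux, ← argminIdx_cons]
    rw [ih (by omega) (g := g) (by omega), ih (by omega) (g := g) (by omega)]

lemma cartesian_eq_node {l : List ℕ} (hl : l ≠ []) :
    cartesian l =
      .node (cartesian (l.take (argminIdx l))) (cartesian (l.drop (argminIdx l + 1))) := by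
  obtain ⟨x, xs, rfl⟩ := List.exists_cons_of_ne_nil hl
  have := length_take_argminIdx_lt hl
  have := length_drop_argminIdx_lt hl
  simp only [List.length_cons] at *
  rw [cartesian, List.length_cons, cartesianAux, ← argminIdx_cons]
  congr 1 <;> exact cartesianAux_congr (by omega) le_rfl

lemma size_cartesian (l : List ℕ) : (cartesian l).size = l.length := by
  induction h : l.length using Nat.strong_induction_on generalizing l with
  | _ n ih =>
  rcases eq_or_ne l [] with rfl | hl
  · rw [← h]; rfl
  have hi := argminIdx_lt_length hl
  rw [cartesian_eq_node hl, BinTree.size, ih _ (h ▸ length_take_argminIdx_lt hl) _ rfl,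
    ih _ (h ▸ length_drop_argminIdx_lt hl) _ rfl]
  simp only [List.length_take, List.length_drop]
  omega

lemma rmqFun_eq_add_argminIdx (A : List ℕ) (i j : ℕ) :
    rmqFun A i j = i + argminIdx ((A.drop (i - 1)).take (j - i + 1)) := rfl

lemma rmqFun_take (A : List ℕ) {m i j : ℕ} (hi : 1 ≤ i) (hij : i ≤ j) (hjm : j ≤ m) :
    rmqFun (A.take m) i j = rmqFun A i j := by
  rw [rmqFun_eq_add_argminIdx, rmqFun_eq_add_argminIdx, List.drop_take, List.take_take,
    min_eq_left (by omega)]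

lemma rmqFun_drop (A : List ℕ) {m i j : ℕ} (hmi : m < i) (hij : i ≤ j) :
    rmqFun A i j = m + rmqFun (A.drop m) (i - m) (j - m) := by
  rw [rmqFun_eq_add_argminIdx, rmqFun_eq_add_argminIdx, List.drop_drop,
    show m + (i - m - 1) = i - 1 by omega, show j - m - (i - m) = j - i by omega]
  omega

lemma rmqFun_eq_argminIdx_add_one {A : List ℕ} (hnd : A.Nodup) {i j : ℕ} (hi : 1 ≤ i)
    (hik : i ≤ argminIdx A + 1) (hkj : argminIdx A + 1 ≤ j) (hj : j ≤ A.length) :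
    rmqFun A i j = argminIdx A + 1 := by
  have hA : A ≠ [] := List.ne_nil_of_length_pos (by omega)
  set k := argminIdx A
  set s := (A.drop (i - 1)).take (j - i + 1)
  have hs : s.Sublist A := (List.take_sublist _ _).trans (List.drop_sublist _ _)
  have hks : k - (i - 1) < s.length := by simp only [s, List.length_take, List.length_drop]; omega
  have hsk : s[k - (i - 1)] = A[k]'(argminIdx_lt_length hA) := by
    simp only [s, List.getElem_take, List.getElem_drop]
    congr 1
    omega
  have hmin : ∀ b ∈ s, s[k - (i - 1)] ≤ b := fun b hb =>
    hsk ▸ getElem_argminIdx_le hA b (hs.mem hb)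
  rw [rmqFun_eq_add_argminIdx, argminIdx_eq_of_nodup (hnd.sublist hs) hks hmin]
  omega

lemma lcaInorder_node_of_le_size {l r : BinTree} {i j : ℕ} (hi : i ≤ l.size)
    (hj : j ≤ l.size) :
    lcaInorder (.node l r) i j = lcaInorder l i j := by
  rw [lcaInorder, if_pos (by omega)]

lemma lcaInorder_node_of_size_lt {l r : BinTree} {i j : ℕ} (hi : l.size + 1 < i)
    (hj : l.size + 1 < j) :
    lcaInorder (.node l r) i j =
      l.size + 1 + lcaInorder r (i - (l.size + 1)) (j - (l.size + 1)) := by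
  rw [lcaInorder, if_neg (by omega), if_pos (by omega)]

lemma lcaInorder_node_of_le_of_le {l r : BinTree} {i j : ℕ} (hi : i ≤ l.size + 1)
    (hj : l.size + 1 ≤ j) : lcaInorder (.node l r) i j = l.size + 1 := by
  rw [lcaInorder, if_neg (by omega), if_neg (by omega)]

theorem rmqFun_eq_lcaInorder_cartesian {A : List ℕ} (hnd : A.Nodup) {i j : ℕ} (hi : 1 ≤ i)
    (hij : i ≤ j) (hj : j ≤ A.length) : rmqFun A i j = lcaInorder (cartesian A) i j := by
  induction h : A.length using Nat.strong_induction_on generalizing A i j with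
  | _ n ih =>
  have hA : A ≠ [] := List.ne_nil_of_length_pos (by omega)
  have hk := argminIdx_lt_length hA
  rw [cartesian_eq_node hA]
  set k := argminIdx A
  have hleft : (cartesian (A.take k)).size = k := by
    rw [size_cartesian, List.length_take]; omega
  rcases lt_or_ge j (k + 1) with hjk | hkj
  · rw [lcaInorder_node_of_le_size (by omega) (by omega),
      ← rmqFun_take A (m := k) hi hij (by omega)]
    exact ih _ (h ▸ length_take_argminIdx_lt hA) (hnd.sublist (List.take_sublist _ _)) hi hij
      (by simp only [List.length_take]; omega) rfl
  rcases lt_or_ge (k + 1) i with hki | hik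
  · rw [lcaInorder_node_of_size_lt (by omega) (by omega), hleft, rmqFun_drop A hki hij]
    congr 1
    exact ih _ (h ▸ length_drop_argminIdx_lt hA) (hnd.sublist (List.drop_sublist _ _))
      (by omega) (by omega) (by simp only [List.length_drop]; omega) rfl
  · rw [lcaInorder_node_of_le_of_le (by omega) (by omega), hleft,
      rmqFun_eq_argminIdx_add_one hnd hi hik hkj (by omega)]

theorem eq_of_lcaInorder_eq {s t : BinTree} (hsize : s.size = t.size)
    (hlca : ∀ i j, 1 ≤ i → i ≤ j → j ≤ s.size → lcaInorder s i j = lcaInorder t i j) :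
    s = t := by
  induction s generalizing t with
  | leaf => cases t with
    | leaf => rfl
    | node => simp [BinTree.size] at hsize
  | node l₁ r₁ ihl ihr =>
    obtain _ | ⟨l₂, r₂⟩ := t
    · simp [BinTree.size] at hsize
    simp only [BinTree.size] at hsize hlca
    have hroot := hlca 1 (l₁.size + r₁.size + 1) le_rfl (by omega) le_rfl
    rw [lcaInorder_node_of_le_of_le (by omega) (by omega),
      lcaInorder_node_of_le_of_le (by omega) (by omega)] at hroot
    congr 1
    · refine ihl (by omega) fun i j hi hij hj => ?_
      have := hlca i j hi hij (by omega)
      rwa [lcaInorder_node_of_le_size (by omega) (by omega),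
        lcaInorder_node_of_le_size (by omega) (by omega)] at this
    · refine ihr (by omega) fun i j hi hij hj => ?_
      have := hlca (i + (l₁.size + 1)) (j + (l₁.size + 1)) (by omega) (by omega) (by omega)
      rw [lcaInorder_node_of_size_lt (by omega) (by omega),
        lcaInorder_node_of_size_lt (by omega) (by omega), ← hroot] at this
      simpa using this

def preorderRanks : BinTree → ℕ → List ℕ
  | .leaf, _ => []
  | .node l r, b => preorderRanks l (b + 1) ++ b :: preorderRanks r (b + 1 + l.size)

lemma length_preorderRanks (t : BinTree) (b : ℕ) : (preorderRanks t b).length = t.size := by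
  induction t generalizing b with
  | leaf => rfl
  | node l r ihl ihr =>
    simp only [preorderRanks, List.length_append, List.length_cons, ihl, ihr, BinTree.size]
    omega

lemma mem_preorderRanks {t : BinTree} {b x : ℕ} (hx : x ∈ preorderRanks t b) :
    b ≤ x ∧ x < b + t.size := by
  induction t generalizing b with
  | leaf => simp [preorderRanks] at hx
  | node l r ihl ihr =>
    simp only [preorderRanks, List.mem_append, List.mem_cons] at hx
    simp only [BinTree.size]
    rcases hx with hx | rfl | hx
    · have := ihl hx; omega
    · omega
    · have := ihr hx; omega

lemma nodup_preorderRanks (t : BinTree) (b : ℕ) : (preorderRanks t b).Nodup := by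
  induction t generalizing b with
  | leaf => exact List.nodup_nil
  | node l r ihl ihr =>
    rw [preorderRanks, List.nodup_append, List.nodup_cons]
    refine ⟨ihl _, ⟨fun hb => ?_, ihr _⟩, fun x hxl y hy hxy => ?_⟩
    · have := mem_preorderRanks hb; omega
    · have := mem_preorderRanks hxl
      rcases List.mem_cons.mp hy with rfl | hy
      · omega
      · have := mem_preorderRanks hy; omega

theorem cartesian_preorderRanks (t : BinTree) (b : ℕ) : cartesian (preorderRanks t b) = t := by
  induction t generalizing b with
  | leaf => rfl
  | node l r ihl ihr =>
    have hroot : argminIdx (preorderRanks (.node l r) b) = (preorderRanks l (b + 1)).length := by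
      refine argminIdx_eq_of_nodup (nodup_preorderRanks _ b) (by simp [preorderRanks])
        fun x hx => ?_
      simpa [preorderRanks] using (mem_preorderRanks hx).1
    rw [cartesian_eq_node (by simp [preorderRanks]), hroot]
    simp [preorderRanks, ihl, ihr]

/-- The Cartesian tree induces a bijection between RMQ answer functions of
length-`n` arrays with distinct entries and binary trees with `n` nodes:
two arrays have the same answer function iff they have the same Cartesian tree,
and every binary tree on `n` nodes arises; moreover `rmq_A(i,j)` equals the
inorder rank of the LCA of the nodes with inorder ranks `i` and `j` in the
Cartesian tree of `A`. -/
theorem stmt9 (n : ℕ) :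
    (∀ A B : List ℕ, A.length = n → B.length = n → A.Nodup → B.Nodup →
      ((∀ i j : ℕ, 1 ≤ i → i ≤ j → j ≤ n → rmqFun A i j = rmqFun B i j)
        ↔ cartesian A = cartesian B))
    ∧ (∀ t : BinTree, t.size = n →
        ∃ A : List ℕ, A.length = n ∧ A.Nodup ∧ cartesian A = t)
    ∧ (∀ A : List ℕ, A.length = n → A.Nodup →
        ∀ i j : ℕ, 1 ≤ i → i ≤ j → j ≤ n →
          rmqFun A i j = lcaInorder (cartesian A) i j) := by
  refine ⟨fun A B hA hB hndA hndB => ⟨fun h => ?_, fun h i j hi hij hj => ?_⟩,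
    fun t ht => ⟨preorderRanks t 0, by rw [length_preorderRanks, ht], nodup_preorderRanks t 0,
      cartesian_preorderRanks t 0⟩,
    fun A hA hnd i j hi hij hj => rmqFun_eq_lcaInorder_cartesian hnd hi hij (hA ▸ hj)⟩
  · refine eq_of_lcaInorder_eq (by rw [size_cartesian, size_cartesian, hA, hB])
      fun i j hi hij hj => ?_
    rw [size_cartesian, hA] at hj
    rw [← rmqFun_eq_lcaInorder_cartesian hndA hi hij (hA ▸ hj),
      ← rmqFun_eq_lcaInorder_cartesian hndB hi hij (hB ▸ hj)]
    exact h i j hi hij hj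
  · rw [rmqFun_eq_lcaInorder_cartesian hndA hi hij (hA ▸ hj),
      rmqFun_eq_lcaInorder_cartesian hndB hi hij (hB ▸ hj), h]
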